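/- Let (X,Y) have the survival copula of the Nelsen 4.2.15 copula with parameter α > 1 on generalized Pareto margins with shape ξ_m = -1/α and unit scale. Then in L^1 polar coordinates R = X+Y, Q = Y/R, the upper endpoint of R given Q = q is r_F(q) = α/((1-q)^α + q^α)^{1/α}, the angular density is f_Q(q) = α(q(1-q))^{α-1}((1-q)^α + q^α)^{-2}, and the conditional radial density satisfies f_{R|Q}(r_F(q) - s | q) = α^{1-α}(α-1)((1-q)^α + q^α)^{1-1/α}·s^{α-2}, which is exactly a generalized Pareto density with shape ξ = -1/(α-1). -/

import Mathlib

open MeasureTheory Set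

/-- Density of the Nelsen 4.2.15 copula with parameter `α > 1`, supported on
`{(1-u^{1/α})^α + (1-v^{1/α})^α ≤ 1}`. -/
noncomputable def nelsenDens (α u v : ℝ) : ℝ :=
  if 0 < u ∧ u ≤ 1 ∧ 0 < v ∧ v ≤ 1 ∧
      (1 - u ^ (1 / α)) ^ α + (1 - v ^ (1 / α)) ^ α ≤ 1 then
    (1 - 1 / α) * (u * v) ^ (1 / α - 1) *
      ((1 - u ^ (1 / α)) * (1 - v ^ (1 / α))) ^ (α - 1) *
      ((1 - u ^ (1 / α)) ^ α + (1 - v ^ (1 / α)) ^ α) ^ (1 / α - 2) *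
      (1 - ((1 - u ^ (1 / α)) ^ α + (1 - v ^ (1 / α)) ^ α) ^ (1 / α)) ^ (α - 2)
  else 0

/-- GP density with shape `ξ_m = -1/α` and unit scale: `(1-x/α)^{α-1}` on `[0,α]`. -/
noncomputable def gpDensN (α x : ℝ) : ℝ :=
  if 0 ≤ x ∧ x ≤ α then (1 - x / α) ^ (α - 1) else 0

/-- GP cdf with shape `ξ_m = -1/α` and unit scale. -/
noncomputable def gpCdfN (α x : ℝ) : ℝ :=
  if x < 0 then 0 else if x ≤ α then 1 - (1 - x / α) ^ α else 1

/-- Angular-radial density of `(R,Q) = (X+Y, Y/(X+Y))` for the Nelsen 4.2.15 survival copula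
`ĉ(u,v) = c(1-u,1-v)` on GP margins with shape `-1/α`. -/
noncomputable def nelsenRQ (α r q : ℝ) : ℝ :=
  r * gpDensN α (r * (1 - q)) * gpDensN α (r * q) *
    nelsenDens α (1 - gpCdfN α (r * (1 - q))) (1 - gpCdfN α (r * q))

/-- Upper endpoint of `R` given `Q = q`: `r_F(q) = α/((1-q)^α + q^α)^{1/α}`. -/
noncomputable def rFN (α q : ℝ) : ℝ := α / ((1 - q) ^ α + q ^ α) ^ (1 / α)

/-!
Substituting the generator coordinates `x = 1 - u^{1/α}` of the copula, the GP margins become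
linear: the point `(r(1-q), rq)` has coordinates `x = r(1-q)/α`, `y = rq/α`, and the marginal
densities cancel against the Jacobian factor `((1-x)(1-y))^{1-α}` of the copula density. By
homogeneity `(x^α + y^α)^{1/α} = r / r_F(q)`, so the support ends at `r_F(q)` and the joint density
factorises as `f_Q(q) · (α-1)(r_F - r)^{α-2} / r_F^{α-1}`: a power law in the distance to the
endpoint, i.e. the GP density with shape `-1/(α-1)` and scale `r_F/(α-1)`.
-/
open Real

section

variable {α x y q r : ℝ}

lemma rpow_rpow_one_div (hx : 0 ≤ x) (hy : y ≠ 0) : (x ^ y) ^ (1 / y) = x := by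
  rw [one_div, rpow_rpow_inv hx hy]

lemma one_sub_gpCdfN (hx : 0 ≤ x) (hxα : x ≤ α) : 1 - gpCdfN α x = (1 - x / α) ^ α := by
  rw [gpCdfN, if_neg hx.not_gt, if_pos hxα, sub_sub_cancel]

lemma gpDensN_of_lt (h : α < x) : gpDensN α x = 0 :=
  if_neg fun hx => h.not_ge hx.2

lemma jacobian_mul_nelsenDens (hα : 0 < α) (hx : x ∈ Ico 0 1) (hy : y ∈ Ico 0 1)
    (hxy : x ^ α + y ^ α ≤ 1) :
    (1 - x) ^ (α - 1) * (1 - y) ^ (α - 1) * nelsenDens α ((1 - x) ^ α) ((1 - y) ^ α) =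
      (1 - 1 / α) * (x * y) ^ (α - 1) * (x ^ α + y ^ α) ^ (1 / α - 2) *
        (1 - (x ^ α + y ^ α) ^ (1 / α)) ^ (α - 2) := by
  obtain ⟨hx0, hx1⟩ := hx
  obtain ⟨hy0, hy1⟩ := hy
  have hx' : 0 < 1 - x := sub_pos.2 hx1
  have hy' : 0 < 1 - y := sub_pos.2 hy1
  have hle : ∀ t : ℝ, 0 ≤ t → t < 1 → (1 - t) ^ α ≤ 1 := fun t ht _ =>
    rpow_le_one (by linarith) (by linarith) hα.le
  rw [nelsenDens, rpow_rpow_one_div hx'.le hα.ne', rpow_rpow_one_div hy'.le hα.ne',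
    sub_sub_cancel, sub_sub_cancel,
    if_pos ⟨by positivity, hle x hx0 hx1, by positivity, hle y hy0 hy1, hxy⟩,
    ← mul_rpow hx'.le hy'.le, ← mul_rpow hx'.le hy'.le, ← rpow_mul (by positivity)]
  have hcancel : ((1 - x) * (1 - y)) ^ (α - 1) * ((1 - x) * (1 - y)) ^ (α * (1 / α - 1)) = 1 := by
    rw [← rpow_add (by positivity), show α - 1 + α * (1 / α - 1) = 0 by field_simp; ring, rpow_zero]
  linear_combination (1 - 1 / α) * (x * y) ^ (α - 1) * (x ^ α + y ^ α) ^ (1 / α - 2) *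
        (1 - (x ^ α + y ^ α) ^ (1 / α)) ^ (α - 2) * hcancel

lemma nelsenDens_eq_zero (hα : 0 < α) (hx : x ≤ 1) (hy : y ≤ 1) (hxy : 1 < x ^ α + y ^ α) :
    nelsenDens α ((1 - x) ^ α) ((1 - y) ^ α) = 0 := by
  rw [nelsenDens, if_neg]
  rintro ⟨-, -, -, -, h⟩
  rw [rpow_rpow_one_div (by linarith) hα.ne', rpow_rpow_one_div (by linarith) hα.ne',
    sub_sub_cancel, sub_sub_cancel] at h
  linarith

lemma nelsenRQ_eq (hr : 0 ≤ r) (hq : q ∈ Icc 0 1) (hxα : r * (1 - q) ≤ α) (hyα : r * q ≤ α) :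
    nelsenRQ α r q = r * ((1 - r * (1 - q) / α) ^ (α - 1) * (1 - r * q / α) ^ (α - 1) *
      nelsenDens α ((1 - r * (1 - q) / α) ^ α) ((1 - r * q / α) ^ α)) := by
  have hx : 0 ≤ r * (1 - q) := mul_nonneg hr (by linarith [hq.2])
  have hy : 0 ≤ r * q := mul_nonneg hr hq.1
  rw [nelsenRQ, gpDensN, gpDensN, if_pos ⟨hx, hxα⟩, if_pos ⟨hy, hyα⟩,
    one_sub_gpCdfN hx hxα, one_sub_gpCdfN hy hyα]
  ring

lemma integral_sub_rpow {c p : ℝ} (hp : -1 < p) :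
    ∫ r in (0)..c, (c - r) ^ p = c ^ (p + 1) / (p + 1) := by
  rw [intervalIntegral.integral_comp_sub_left (fun r => r ^ p), sub_self, sub_zero,
    integral_rpow (Or.inl hp), zero_rpow (by linarith), sub_zero]

lemma rFN_pos (hα : 0 < α) (hq : q ∈ Ioo 0 1) : 0 < rFN α q := by
  have hq0 : 0 < q := hq.1
  have hq1 : 0 < 1 - q := sub_pos.2 hq.2
  unfold rFN; positivity

lemma div_rFN_rpow (hα : 0 < α) (hq : q ∈ Ioo 0 1) (hr : 0 ≤ r) :
    (r / rFN α q) ^ α = (r * (1 - q) / α) ^ α + (r * q / α) ^ α := by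
  have hq0 : 0 < q := hq.1
  have hq1 : 0 < 1 - q := sub_pos.2 hq.2
  rw [rFN, div_div_eq_mul_div, mul_div_right_comm, mul_rpow (by positivity) (by positivity),
    ← rpow_mul (by positivity), one_div_mul_cancel hα.ne', rpow_one, mul_div_right_comm,
    mul_div_right_comm r q, mul_rpow (by positivity) hq1.le, mul_rpow (by positivity) hq0.le]
  ring

lemma nelsenRQ_eq_zero_of_rFN_lt (hα : 0 < α) (hq : q ∈ Ioo 0 1) (hr : rFN α q < r) :
    nelsenRQ α r q = 0 := by
  have hr0 : 0 ≤ r := (rFN_pos hα hq).le.trans hr.le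
  by_cases hxα : r * (1 - q) ≤ α
  swap
  · rw [nelsenRQ, gpDensN_of_lt (not_le.1 hxα)]; ring
  by_cases hyα : r * q ≤ α
  swap
  · rw [nelsenRQ, gpDensN_of_lt (not_le.1 hyα)]; ring
  have hsum : 1 < (r * (1 - q) / α) ^ α + (r * q / α) ^ α := by
    rw [← div_rFN_rpow hα hq hr0]
    exact one_lt_rpow ((one_lt_div (rFN_pos hα hq)).2 hr) hα
  rw [nelsenRQ_eq hr0 (Ioo_subset_Icc_self hq) hxα hyα,
    nelsenDens_eq_zero hα ((div_le_one hα).2 hxα) ((div_le_one hα).2 hyα) hsum, mul_zero, mul_zero]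

lemma nelsenRQ_of_mem_Ioc (hα : 1 < α) (hq : q ∈ Ioo 0 1) (hr : r ∈ Ioc 0 (rFN α q)) :
    nelsenRQ α r q = α * (q * (1 - q)) ^ (α - 1) * ((1 - q) ^ α + q ^ α) ^ (-(2 : ℝ)) *
      ((α - 1) / rFN α q ^ (α - 1) * (rFN α q - r) ^ (α - 2)) := by
  have hα0 : 0 < α := by linarith
  have hα1 : 0 < α - 1 := by linarith
  have hq0 : 0 < q := hq.1
  have hq1 : 0 < 1 - q := sub_pos.2 hq.2
  have hrF := rFN_pos hα0 hq
  obtain ⟨hr0, hrr⟩ := hr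
  set x := r * (1 - q) / α
  set y := r * q / α
  have hsum := div_rFN_rpow hα0 hq hr0.le
  have hxy : x ^ α + y ^ α ≤ 1 :=
    hsum ▸ rpow_le_one (by positivity) ((div_le_one hrF).2 hrr) hα0.le
  have hx1 : x < 1 := by
    by_contra! h
    linarith [one_le_rpow h hα0.le, rpow_pos_of_pos (show 0 < y by positivity) α]
  have hy1 : y < 1 := by
    by_contra! h
    linarith [one_le_rpow h hα0.le, rpow_pos_of_pos (show 0 < x by positivity) α]
  have hcoeff : r * ((1 - 1 / α) * (x * y) ^ (α - 1) * ((r / rFN α q) ^ α) ^ (1 / α - 2)) /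
      rFN α q ^ (α - 2) = α * (q * (1 - q)) ^ (α - 1) * ((1 - q) ^ α + q ^ α) ^ (-(2 : ℝ)) *
        (α - 1) / rFN α q ^ (α - 1) := by
    rw [show 1 - 1 / α = (α - 1) / α by field_simp]
    refine log_injOn_pos (by simp only [mem_Ioi, x, y, rFN]; positivity)
      (by simp only [mem_Ioi, rFN]; positivity) ?_
    simp (disch := positivity) only [x, y, rFN, log_mul, log_div, log_rpow]
    field_simp
    ring
  rw [nelsenRQ_eq hr0.le (Ioo_subset_Icc_self hq) ((div_lt_one hα0).1 hx1).le
      ((div_lt_one hα0).1 hy1).le,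
    jacobian_mul_nelsenDens hα0 ⟨by positivity, hx1⟩ ⟨by positivity, hy1⟩ hxy, ← hsum,
    rpow_rpow_one_div (by positivity) hα0.ne', one_sub_div hrF.ne',
    div_rpow (sub_nonneg.2 hrr) hrF.le]
  linear_combination (rFN α q - r) ^ (α - 2) * hcoeff

lemma inv_rFN_rpow (hα : 0 < α) (hq : q ∈ Ioo 0 1) (p : ℝ) :
    (rFN α q ^ p)⁻¹ = α ^ (-p) * ((1 - q) ^ α + q ^ α) ^ (p / α) := by
  have hq0 : 0 < q := hq.1
  have hq1 : 0 < 1 - q := sub_pos.2 hq.2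
  rw [← rpow_neg (rFN_pos hα hq).le, rFN, div_rpow (by positivity) (by positivity),
    ← rpow_mul (by positivity), div_eq_mul_inv, ← rpow_neg (by positivity)]
  ring_nf

lemma integral_nelsenRQ (hα : 1 < α) (hq : q ∈ Ioo 0 1) :
    ∫ r in Ioi 0, nelsenRQ α r q =
      α * (q * (1 - q)) ^ (α - 1) * ((1 - q) ^ α + q ^ α) ^ (-(2 : ℝ)) := by
  have hα0 : 0 < α := by linarith
  have hrF := rFN_pos hα0 hq
  calc ∫ r in Ioi 0, nelsenRQ α r q = ∫ r in Ioc 0 (rFN α q), nelsenRQ α r q :=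
        setIntegral_eq_of_subset_of_forall_sdiff_eq_zero measurableSet_Ioi Ioc_subset_Ioi_self
          fun r hr => nelsenRQ_eq_zero_of_rFN_lt hα0 hq (not_le.1 fun h => hr.2 ⟨hr.1, h⟩)
    _ = ∫ r in (0)..(rFN α q), α * (q * (1 - q)) ^ (α - 1) * ((1 - q) ^ α + q ^ α) ^ (-(2 : ℝ)) *
          ((α - 1) / rFN α q ^ (α - 1) * (rFN α q - r) ^ (α - 2)) := by
      rw [intervalIntegral.integral_of_le hrF.le]
      exact setIntegral_congr_fun measurableSet_Ioc fun r hr => nelsenRQ_of_mem_Ioc hα hq hr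
    _ = α * (q * (1 - q)) ^ (α - 1) * ((1 - q) ^ α + q ^ α) ^ (-(2 : ℝ)) := by
      rw [intervalIntegral.integral_const_mul, intervalIntegral.integral_const_mul,
        integral_sub_rpow (by linarith), show α - 2 + 1 = α - 1 by ring]
      have : rFN α q ^ (α - 1) ≠ 0 := (rpow_pos_of_pos hrF _).ne'
      field_simp [show α - 1 ≠ 0 by linarith]

lemma nelsenRQ_div_integral (hα : 1 < α) (hq : q ∈ Ioo 0 1) {s : ℝ} (hs : s ∈ Ioo 0 (rFN α q)) :
    nelsenRQ α (rFN α q - s) q / ∫ r in Ioi 0, nelsenRQ α r q =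
      (α - 1) / rFN α q ^ (α - 1) * s ^ (α - 2) := by
  have hq0 : 0 < q := hq.1
  have hq1 : 0 < 1 - q := sub_pos.2 hq.2
  rw [nelsenRQ_of_mem_Ioc hα hq ⟨by linarith [hs.2], by linarith [hs.1]⟩, sub_sub_cancel,
    integral_nelsenRQ hα hq, mul_div_cancel_left₀ _ (by positivity)]

lemma nelsenRQ_rFN_sub (hα : 1 < α) (hq : q ∈ Ioo 0 1) {s : ℝ} (hs : s ∈ Ioo 0 (rFN α q)) :
    nelsenRQ α (rFN α q - s) q = α ^ (2 - α) * (α - 1) * (q * (1 - q)) ^ (α - 1) *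
      ((1 - q) ^ α + q ^ α) ^ (-1 / α - 1) * s ^ (α - 2) := by
  have hα0 : 0 < α := by linarith
  have hq0 : 0 < q := hq.1
  have hq1 : 0 < 1 - q := sub_pos.2 hq.2
  rw [nelsenRQ_of_mem_Ioc hα hq ⟨by linarith [hs.2], by linarith [hs.1]⟩, sub_sub_cancel,
    div_eq_mul_inv, inv_rFN_rpow hα0 hq, neg_sub, show 2 - α = 1 + (1 - α) by ring,
    rpow_add hα0, rpow_one, show -1 / α - 1 = -2 + (α - 1) / α by field_simp; ring,
    rpow_add (by positivity)]
  ring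

end

lemma gp_density_of_endpoint {α r s : ℝ} (hα : 1 < α) (hr : 0 < r) (hs : 0 < s) :
    (r / (α - 1)) ^ (1 / (-1 / (α - 1))) * (-(-1 / (α - 1)) * s) ^ (-1 - 1 / (-1 / (α - 1))) =
      (α - 1) / r ^ (α - 1) * s ^ (α - 2) := by
  have hα1 : 0 < α - 1 := by linarith
  rw [show 1 / (-1 / (α - 1)) = 1 - α by field_simp; ring,
    show -1 - (1 - α) = α - 2 by ring, neg_div, neg_neg]
  refine log_injOn_pos (by simp only [mem_Ioi]; positivity) (by simp only [mem_Ioi]; positivity) ?_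
  simp (disch := positivity) only [log_mul, log_div, log_rpow, log_one]
  ring

/-- Nelsen 4.2.15 survival copula on GP margins with shape `ξ_m = -1/α`, `α > 1`: the radial
endpoint is `r_F(q) = α/((1-q)^α+q^α)^{1/α}`, the angular density is
`α(q(1-q))^{α-1}((1-q)^α+q^α)^{-2}`, and the conditional radial density at distance `s`
below the endpoint equals `α^{1-α}(α-1)((1-q)^α+q^α)^{1-1/α}·s^{α-2}`, exactly a
generalized Pareto density with shape `ξ = -1/(α-1)`. -/
theorem stmt15 (α : ℝ) (hα : 1 < α) :
    (∀ q ∈ Set.Ioo (0 : ℝ) 1, ∀ r : ℝ, rFN α q < r → nelsenRQ α r q = 0) ∧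
    (∀ q ∈ Set.Ioo (0 : ℝ) 1, ∀ s ∈ Set.Ioo (0 : ℝ) (rFN α q),
      nelsenRQ α (rFN α q - s) q
        = α ^ (2 - α) * (α - 1) * (q * (1 - q)) ^ (α - 1) *
            ((1 - q) ^ α + q ^ α) ^ (-1 / α - 1) * s ^ (α - 2)) ∧
    (∀ q ∈ Set.Ioo (0 : ℝ) 1,
      (∫ r in Set.Ioi (0 : ℝ), nelsenRQ α r q)
        = α * (q * (1 - q)) ^ (α - 1) * ((1 - q) ^ α + q ^ α) ^ (-(2 : ℝ))) ∧
    (∀ q ∈ Set.Ioo (0 : ℝ) 1, ∀ s ∈ Set.Ioo (0 : ℝ) (rFN α q),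
      nelsenRQ α (rFN α q - s) q / (∫ r in Set.Ioi (0 : ℝ), nelsenRQ α r q)
        = α ^ (1 - α) * (α - 1) * ((1 - q) ^ α + q ^ α) ^ (1 - 1 / α) * s ^ (α - 2)) ∧
    (∃ σ : ℝ → ℝ, ∀ q ∈ Set.Ioo (0 : ℝ) 1, 0 < σ q ∧
      ∀ s ∈ Set.Ioo (0 : ℝ) (rFN α q),
        nelsenRQ α (rFN α q - s) q / (∫ r in Set.Ioi (0 : ℝ), nelsenRQ α r q)
          = (σ q) ^ (1 / (-1 / (α - 1))) *
              (-(-1 / (α - 1)) * s) ^ (-1 - 1 / (-1 / (α - 1)))) := by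
  have hα0 : 0 < α := by linarith
  refine ⟨fun q hq r hr => nelsenRQ_eq_zero_of_rFN_lt hα0 hq hr,
    fun q hq s hs => nelsenRQ_rFN_sub hα hq hs,
    fun q hq => integral_nelsenRQ hα hq, fun q hq s hs => ?_,
    ⟨fun q => rFN α q / (α - 1), fun q hq => ⟨div_pos (rFN_pos hα0 hq) (by linarith),
      fun s hs => by rw [nelsenRQ_div_integral hα hq hs,
        gp_density_of_endpoint hα (rFN_pos hα0 hq) hs.1]⟩⟩⟩
  · rw [nelsenRQ_div_integral hα hq hs, div_eq_mul_inv, inv_rFN_rpow hα0 hq, neg_sub, sub_div,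
      div_self hα0.ne']
    ring
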